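/- arXiv:2406.15389 — 6 statements merged into one kernel-verified Lean document; each statement's English description precedes it below -/
import Mathlib

section
/- Let X be a normed linear space, Y a Banach space, f : X×X → Y, α, β real numbers, f₁, f₂ : X×X → X×X arbitrary maps, and μ : X×X → [0,∞). Define the linear operator Λ on functions δ : X×X → [0,∞) by (Λδ)(x,y) = |α|δ(f₁(x,y)) + |β|δ(f₂(x,y)). Suppose ‖f(x,y) − α f(f₁(x,y)) − β f(f₂(x,y))‖ ≤ μ(x,y) for all (x,y) ∈ X×X and that μ*(x,y) := Σ_{n=0}^∞ (Λⁿμ)(x,y) < ∞ for all (x,y). Then there exists a unique mapping K : X×X → Y satisfying K(x,y) = α K(f₁(x,y)) + β K(f₂(x,y)) for all (x,y) and ‖f(x,y) − K(x,y)‖ ≤ μ*(x,y) for all (x,y) ∈ X×X. -/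
theorem stmt_0 {X Y : Type*} [NormedAddCommGroup X] [NormedSpace ℝ X]
    [NormedAddCommGroup Y] [NormedSpace ℝ Y] [CompleteSpace Y]
    (f : X × X → Y) (α β : ℝ) (f₁ f₂ : X × X → X × X) (μ : X × X → ℝ)
    (hμ : ∀ p, 0 ≤ μ p)
    (h : ∀ p : X × X, ‖f p - α • f (f₁ p) - β • f (f₂ p)‖ ≤ μ p)
    (Λ : (X × X → ℝ) → (X × X → ℝ))
    (hΛ : ∀ δ p, Λ δ p = |α| * δ (f₁ p) + |β| * δ (f₂ p))
    (hsum : ∀ p : X × X, Summable fun n : ℕ => (Λ^[n] μ) p) :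
    ∃! K : X × X → Y,
      (∀ p : X × X, K p = α • K (f₁ p) + β • K (f₂ p)) ∧
      (∀ p : X × X, ‖f p - K p‖ ≤ ∑' n : ℕ, (Λ^[n] μ) p) := by
  classical
  set T : (X × X → Y) → (X × X → Y) := fun g p => α • g (f₁ p) + β • g (f₂ p) with hT
  set g : ℕ → X × X → Y := fun n => T^[n] f with hg
  set d : ℕ → X × X → Y := fun n p => g (n + 1) p - g n p with hd
  have hμn : ∀ n p, 0 ≤ (Λ^[n] μ) p := by
    intro n
    induction n with
    | zero => simpa using hμ
    | succ n ih =>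
      intro p
      rw [Function.iterate_succ_apply', hΛ]
      exact add_nonneg (mul_nonneg (abs_nonneg _) (ih _)) (mul_nonneg (abs_nonneg _) (ih _))
  have hg1 : ∀ n p, g (n + 1) p = α • g n (f₁ p) + β • g n (f₂ p) := by
    intro n p
    show (T^[n + 1] f) p = _
    rw [Function.iterate_succ_apply']
  have hg0 : ∀ q, g 0 q = f q := fun q => rfl
  have hdrec : ∀ n p, d (n + 1) p = α • d n (f₁ p) + β • d n (f₂ p) := by
    intro n p
    simp only [hd, hg1, smul_sub]
    abel
  have hdbound : ∀ n p, ‖d n p‖ ≤ (Λ^[n] μ) p := by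
    intro n
    induction n with
    | zero =>
      intro p
      have hd0 : d 0 p = -(f p - α • f (f₁ p) - β • f (f₂ p)) := by
        simp only [hd, hg1, hg0]
        abel
      rw [hd0, norm_neg]
      simpa using h p
    | succ n ih =>
      intro p
      rw [hdrec, Function.iterate_succ_apply', hΛ]
      calc ‖α • d n (f₁ p) + β • d n (f₂ p)‖
          ≤ ‖α • d n (f₁ p)‖ + ‖β • d n (f₂ p)‖ := norm_add_le _ _
        _ = |α| * ‖d n (f₁ p)‖ + |β| * ‖d n (f₂ p)‖ := by
            rw [norm_smul, norm_smul, Real.norm_eq_abs, Real.norm_eq_abs]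
        _ ≤ |α| * (Λ^[n] μ) (f₁ p) + |β| * (Λ^[n] μ) (f₂ p) :=
            add_le_add (mul_le_mul_of_nonneg_left (ih _) (abs_nonneg _))
              (mul_le_mul_of_nonneg_left (ih _) (abs_nonneg _))
  have hdsum : ∀ p, Summable fun n => ‖d n p‖ :=
    fun p => Summable.of_nonneg_of_le (fun n => norm_nonneg _) (fun n => hdbound n p) (hsum p)
  have hdS : ∀ p, Summable fun n => d n p := fun p => (hdsum p).of_norm
  set K : X × X → Y := fun p => f p + ∑' n, d n p with hK
  -- functional equation for K
  have hKfe : ∀ p, K p = α • K (f₁ p) + β • K (f₂ p) := by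
    intro p
    have e2 : HasSum (fun n => α • d n (f₁ p) + β • d n (f₂ p))
        (α • ∑' n, d n (f₁ p) + β • ∑' n, d n (f₂ p)) :=
      (((hdS (f₁ p)).hasSum.const_smul α).add ((hdS (f₂ p)).hasSum.const_smul β))
    have e3 : HasSum (fun n => d (n + 1) p)
        (α • ∑' n, d n (f₁ p) + β • ∑' n, d n (f₂ p)) := by
      refine e2.congr_fun fun n => hdrec n p
    have e4 : ∑' n, d n p = d 0 p + (α • ∑' n, d n (f₁ p) + β • ∑' n, d n (f₂ p)) := by
      rw [Summable.tsum_eq_zero_add (hdS p), e3.tsum_eq]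
    have e5 : d 0 p = α • f (f₁ p) + β • f (f₂ p) - f p := by
      simp only [hd, hg1, hg0]
    simp only [hK, smul_add]
    rw [e4, e5]
    abel
  -- approximation bound for K
  have hKbd : ∀ p, ‖f p - K p‖ ≤ ∑' n : ℕ, (Λ^[n] μ) p := by
    intro p
    have : f p - K p = -∑' n, d n p := by simp [hK]
    rw [this, norm_neg]
    calc ‖∑' n, d n p‖ ≤ ∑' n, ‖d n p‖ := norm_tsum_le_tsum_norm (hdsum p)
      _ ≤ ∑' n, (Λ^[n] μ) p := Summable.tsum_le_tsum (fun n => hdbound n p) (hdsum p) (hsum p)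
  refine ⟨K, ⟨hKfe, hKbd⟩, ?_⟩
  rintro K' ⟨hK'fe, hK'bd⟩
  -- uniqueness
  have htail : ∀ (n : ℕ) q, Summable fun k : ℕ => (Λ^[k + n] μ) q := by
    intro n q
    exact (summable_nat_add_iff n).2 (hsum q)
  have hmono : ∀ (n : ℕ) (δ δ' : X × X → ℝ), (∀ q, δ q ≤ δ' q) →
      ∀ q, (Λ^[n] δ) q ≤ (Λ^[n] δ') q := by
    intro n
    induction n with
    | zero => intro δ δ' hle q; simpa using hle q
    | succ n ih =>
      intro δ δ' hle q
      rw [Function.iterate_succ_apply', Function.iterate_succ_apply', hΛ, hΛ]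
      exact add_le_add (mul_le_mul_of_nonneg_left (ih _ _ hle _) (abs_nonneg _))
        (mul_le_mul_of_nonneg_left (ih _ _ hle _) (abs_nonneg _))
  set D : X × X → ℝ := fun p => ‖K' p - K p‖ with hD
  have hDrec : ∀ p, D p ≤ Λ D p := by
    intro p
    rw [hΛ]
    have : K' p - K p = α • (K' (f₁ p) - K (f₁ p)) + β • (K' (f₂ p) - K (f₂ p)) := by
      rw [hKfe p, hK'fe p, smul_sub, smul_sub]
      abel
    simp only [hD]
    rw [this]
    calc ‖α • (K' (f₁ p) - K (f₁ p)) + β • (K' (f₂ p) - K (f₂ p))‖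
        ≤ ‖α • (K' (f₁ p) - K (f₁ p))‖ + ‖β • (K' (f₂ p) - K (f₂ p))‖ := norm_add_le _ _
      _ = |α| * ‖K' (f₁ p) - K (f₁ p)‖ + |β| * ‖K' (f₂ p) - K (f₂ p)‖ := by
          rw [norm_smul, norm_smul, Real.norm_eq_abs, Real.norm_eq_abs]
  have hDiter : ∀ n p, D p ≤ (Λ^[n] D) p := by
    intro n
    induction n with
    | zero => intro p; simp
    | succ n ih =>
      intro p
      calc D p ≤ (Λ^[n] D) p := ih p
        _ ≤ (Λ^[n] (Λ D)) p := hmono n D (Λ D) hDrec p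
        _ = (Λ^[n + 1] D) p := by rw [Function.iterate_succ_apply]
  set M : X × X → ℝ := fun q => 2 * ∑' k : ℕ, (Λ^[k] μ) q with hM
  have hDM : ∀ q, D q ≤ M q := by
    intro q
    have : K' q - K q = (f q - K q) - (f q - K' q) := by abel
    simp only [hD, hM, this]
    calc ‖(f q - K q) - (f q - K' q)‖ ≤ ‖f q - K q‖ + ‖f q - K' q‖ := norm_sub_le _ _
      _ ≤ (∑' n : ℕ, (Λ^[n] μ) q) + ∑' n : ℕ, (Λ^[n] μ) q := add_le_add (hKbd q) (hK'bd q)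
      _ = 2 * ∑' k : ℕ, (Λ^[k] μ) q := by ring
  have hiterM : ∀ n p, (Λ^[n] M) p = 2 * ∑' k : ℕ, (Λ^[k + n] μ) p := by
    intro n
    induction n with
    | zero => intro p; simp [hM]
    | succ n ih =>
      intro p
      rw [Function.iterate_succ_apply', hΛ, ih, ih]
      have h1 : HasSum (fun k : ℕ => |α| * (Λ^[k + n] μ) (f₁ p) + |β| * (Λ^[k + n] μ) (f₂ p))
          (|α| * (∑' k : ℕ, (Λ^[k + n] μ) (f₁ p)) + |β| * ∑' k : ℕ, (Λ^[k + n] μ) (f₂ p)) :=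
        ((htail n (f₁ p)).hasSum.mul_left _).add ((htail n (f₂ p)).hasSum.mul_left _)
      have h2 : HasSum (fun k : ℕ => (Λ^[k + (n + 1)] μ) p)
          (|α| * (∑' k : ℕ, (Λ^[k + n] μ) (f₁ p)) + |β| * ∑' k : ℕ, (Λ^[k + n] μ) (f₂ p)) := by
        refine h1.congr_fun fun k => ?_
        have : k + (n + 1) = (k + n) + 1 := by omega
        rw [this, Function.iterate_succ_apply', hΛ]
      rw [h2.tsum_eq]
      ring
  have hD0 : ∀ p, D p ≤ 0 := by
    intro p
    have hbd : ∀ n : ℕ, D p ≤ 2 * ∑' k : ℕ, (Λ^[k + n] μ) p := by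
      intro n
      calc D p ≤ (Λ^[n] D) p := hDiter n p
        _ ≤ (Λ^[n] M) p := hmono n D M hDM p
        _ = 2 * ∑' k : ℕ, (Λ^[k + n] μ) p := hiterM n p
    have htend : Filter.Tendsto (fun n : ℕ => 2 * ∑' k : ℕ, (Λ^[k + n] μ) p)
        Filter.atTop (nhds 0) := by
      have := (tendsto_sum_nat_add (fun k : ℕ => (Λ^[k] μ) p)).const_mul (2 : ℝ)
      simpa using this
    exact ge_of_tendsto htend (Filter.Eventually.of_forall hbd)
  funext p
  have : ‖K' p - K p‖ = 0 := le_antisymm (hD0 p) (norm_nonneg _)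
  have := norm_eq_zero.mp this
  exact sub_eq_zero.mp this
end

section
/- Let X be a normed linear space, Y a Banach space, T the operator (Tg)(x,y) = α g(f₁(x,y)) + β g(f₂(x,y)), and Λ the operator (Λδ)(x,y) = |α|δ(f₁(x,y)) + |β|δ(f₂(x,y)). If ‖f − Tf‖ ≤ μ pointwise and Σ_{n≥0}(Λⁿμ)(x,y) converges for each (x,y), then for every (x,y) ∈ X×X the sequence ((Tⁿf)(x,y))_{n∈ℕ} is a Cauchy sequence in Y. -/
theorem stmt_2 {X Y : Type*} [NormedAddCommGroup X] [NormedSpace ℝ X]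
    [NormedAddCommGroup Y] [NormedSpace ℝ Y] [CompleteSpace Y]
    (f : X × X → Y) (α β : ℝ) (f₁ f₂ : X × X → X × X) (μ : X × X → ℝ)
    (hμ : ∀ p, 0 ≤ μ p)
    (T : (X × X → Y) → (X × X → Y))
    (hT : ∀ g p, T g p = α • g (f₁ p) + β • g (f₂ p))
    (Λ : (X × X → ℝ) → (X × X → ℝ))
    (hΛ : ∀ δ p, Λ δ p = |α| * δ (f₁ p) + |β| * δ (f₂ p))
    (h : ∀ p : X × X, ‖f p - T f p‖ ≤ μ p)
    (hsum : ∀ p : X × X, Summable fun n : ℕ => (Λ^[n] μ) p) :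
    ∀ p : X × X, CauchySeq fun n : ℕ => (T^[n] f) p := by
  have key : ∀ n : ℕ, ∀ p : X × X, ‖T^[n] f p - T^[n+1] f p‖ ≤ Λ^[n] μ p := by
    intro n
    induction n with
    | zero => simpa using h
    | succ n ih =>
      intro p
      rw [Function.iterate_succ_apply', Function.iterate_succ_apply',
        Function.iterate_succ_apply' Λ, hT, hT, hΛ]
      calc ‖α • T^[n] f (f₁ p) + β • T^[n] f (f₂ p)
          - (α • T^[n+1] f (f₁ p) + β • T^[n+1] f (f₂ p))‖
          = ‖α • (T^[n] f (f₁ p) - T^[n+1] f (f₁ p))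
            + β • (T^[n] f (f₂ p) - T^[n+1] f (f₂ p))‖ := by
            rw [smul_sub, smul_sub]; congr 1; abel
        _ ≤ ‖α • (T^[n] f (f₁ p) - T^[n+1] f (f₁ p))‖
            + ‖β • (T^[n] f (f₂ p) - T^[n+1] f (f₂ p))‖ := norm_add_le _ _
        _ = |α| * ‖T^[n] f (f₁ p) - T^[n+1] f (f₁ p)‖
            + |β| * ‖T^[n] f (f₂ p) - T^[n+1] f (f₂ p)‖ := by
            rw [norm_smul, norm_smul, Real.norm_eq_abs, Real.norm_eq_abs]
        _ ≤ |α| * Λ^[n] μ (f₁ p) + |β| * Λ^[n] μ (f₂ p) := by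
            gcongr <;> [exact ih (f₁ p); exact ih (f₂ p)] <;> positivity
  intro p
  apply cauchySeq_of_dist_le_of_summable (fun n => Λ^[n] μ p) _ (hsum p)
  intro n
  rw [dist_eq_norm]
  exact key n p
end

section
/- Let X be a normed linear space, Y a Banach space, f : X×X → Y, real coefficients a₀,…,aₙ, maps g₀,…,gₙ : X×X → X×X, and μ : X×X → [0,∞). Define (Λδ)(x,y) = Σᵢ |aᵢ| δ(gᵢ(x,y)). If ‖f(x,y) − Σᵢ aᵢ f(gᵢ(x,y))‖ ≤ μ(x,y) for all (x,y) and μ*(x,y) := Σ_{m=0}^∞ (Λᵐμ)(x,y) < ∞ for all (x,y), then there exists a unique K : X×X → Y with K(x,y) = Σᵢ aᵢ K(gᵢ(x,y)) for all (x,y) and ‖f(x,y) − K(x,y)‖ ≤ μ*(x,y) for all (x,y). -/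
theorem stmt_3 {X Y : Type*} [NormedAddCommGroup X] [NormedSpace ℝ X]
    [NormedAddCommGroup Y] [NormedSpace ℝ Y] [CompleteSpace Y]
    (f : X × X → Y) (n : ℕ) (a : Fin (n + 1) → ℝ) (g : Fin (n + 1) → X × X → X × X)
    (μ : X × X → ℝ) (hμ : ∀ p, 0 ≤ μ p)
    (Λ : (X × X → ℝ) → (X × X → ℝ))
    (hΛ : ∀ δ p, Λ δ p = ∑ i, |a i| * δ (g i p))
    (h : ∀ p : X × X, ‖f p - ∑ i, a i • f (g i p)‖ ≤ μ p)
    (hsum : ∀ p : X × X, Summable fun m : ℕ => (Λ^[m] μ) p) :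
    ∃! K : X × X → Y,
      (∀ p : X × X, K p = ∑ i, a i • K (g i p)) ∧
      (∀ p : X × X, ‖f p - K p‖ ≤ ∑' m : ℕ, (Λ^[m] μ) p) := by
  classical
  set T : (X × X → Y) → (X × X → Y) := fun u p => ∑ i, a i • u (g i p) with hT
  set F : ℕ → X × X → Y := fun m => T^[m] f with hF
  have hFsucc : ∀ m p, F (m + 1) p = ∑ i, a i • F m (g i p) := by
    intro m p
    simp only [hF, Function.iterate_succ_apply', hT]
  -- nonnegativity of iterates
  have hnn : ∀ m p, 0 ≤ (Λ^[m] μ) p := by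
    intro m
    induction m with
    | zero => simpa using hμ
    | succ m ih =>
      intro p
      rw [Function.iterate_succ_apply', hΛ]
      exact Finset.sum_nonneg fun i _ => mul_nonneg (abs_nonneg _) (ih _)
  -- monotonicity of Λ iterates
  have hmono : ∀ (δ₁ δ₂ : X × X → ℝ), (∀ q, δ₁ q ≤ δ₂ q) →
      ∀ m p, (Λ^[m] δ₁) p ≤ (Λ^[m] δ₂) p := by
    intro δ₁ δ₂ hle m
    induction m with
    | zero => simpa using hle
    | succ m ih =>
      intro p
      rw [Function.iterate_succ_apply', Function.iterate_succ_apply', hΛ, hΛ]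
      exact Finset.sum_le_sum fun i _ =>
        mul_le_mul_of_nonneg_left (ih _) (abs_nonneg _)
  -- key step bound
  have hstep : ∀ m p, ‖F (m + 1) p - F m p‖ ≤ (Λ^[m] μ) p := by
    intro m
    induction m with
    | zero =>
      intro p
      have := h p
      rw [← norm_neg]
      simp only [hFsucc 0 p]
      simpa [hF, norm_sub_rev] using this
    | succ m ih =>
      intro p
      rw [Function.iterate_succ_apply', hΛ]
      have : F (m + 2) p - F (m + 1) p = ∑ i, a i • (F (m + 1) (g i p) - F m (g i p)) := by
        rw [hFsucc (m + 1) p, hFsucc m p, ← Finset.sum_sub_distrib]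
        simp [smul_sub]
      rw [this]
      calc ‖∑ i, a i • (F (m + 1) (g i p) - F m (g i p))‖
          ≤ ∑ i, ‖a i • (F (m + 1) (g i p) - F m (g i p))‖ := norm_sum_le _ _
        _ ≤ ∑ i, |a i| * (Λ^[m] μ) (g i p) := by
            refine Finset.sum_le_sum fun i _ => ?_
            rw [norm_smul, Real.norm_eq_abs]
            exact mul_le_mul_of_nonneg_left (ih _) (abs_nonneg _)
  -- Cauchy and limit
  have hc : ∀ p, ∃ y : Y, Filter.Tendsto (fun m => F m p) Filter.atTop (nhds y) := by
    intro p
    apply cauchySeq_tendsto_of_complete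
    apply cauchySeq_of_dist_le_of_summable (fun m => (Λ^[m] μ) p) _ (hsum p)
    intro m
    rw [dist_eq_norm, norm_sub_rev]
    exact hstep m p
  set K : X × X → Y := fun p => (hc p).choose with hKdef
  have hK : ∀ p, Filter.Tendsto (fun m => F m p) Filter.atTop (nhds (K p)) :=
    fun p => (hc p).choose_spec
  -- K satisfies the functional equation
  have hKeq : ∀ p, K p = ∑ i, a i • K (g i p) := by
    intro p
    have h1 : Filter.Tendsto (fun m => F (m + 1) p) Filter.atTop (nhds (K p)) :=
      (hK p).comp (Filter.tendsto_add_atTop_nat 1)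
    have h2 : Filter.Tendsto (fun m => ∑ i, a i • F m (g i p)) Filter.atTop
        (nhds (∑ i, a i • K (g i p))) := by
      exact tendsto_finset_sum _ fun i _ => (hK (g i p)).const_smul (a i)
    have h1' : Filter.Tendsto (fun m => ∑ i, a i • F m (g i p)) Filter.atTop (nhds (K p)) := by
      refine h1.congr fun m => hFsucc m p
    exact tendsto_nhds_unique h1' h2
  -- bound on ‖f - K‖
  have hbound : ∀ p, ‖f p - K p‖ ≤ ∑' m : ℕ, (Λ^[m] μ) p := by
    intro p
    have hpart : ∀ m, ‖f p - F m p‖ ≤ ∑ k ∈ Finset.range m, (Λ^[k] μ) p := by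
      intro m
      induction m with
      | zero => simp [hF]
      | succ m ih =>
        have : f p - F (m + 1) p = (f p - F m p) + (F m p - F (m + 1) p) := by abel
        rw [this, Finset.sum_range_succ]
        refine le_trans (norm_add_le _ _) (add_le_add ih ?_)
        rw [norm_sub_rev]
        exact hstep m p
    have htend : Filter.Tendsto (fun m => ‖f p - F m p‖) Filter.atTop (nhds ‖f p - K p‖) :=
      ((tendsto_const_nhds.sub (hK p)).norm)
    refine le_of_tendsto htend (Filter.Eventually.of_forall fun m => ?_)
    exact le_trans (hpart m) (Summable.sum_le_tsum _ (fun k _ => hnn k p) (hsum p))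
  -- uniqueness
  have huniq : ∀ K₁ K₂ : X × X → Y,
      ((∀ p, K₁ p = ∑ i, a i • K₁ (g i p)) ∧ (∀ p, ‖f p - K₁ p‖ ≤ ∑' m : ℕ, (Λ^[m] μ) p)) →
      ((∀ p, K₂ p = ∑ i, a i • K₂ (g i p)) ∧ (∀ p, ‖f p - K₂ p‖ ≤ ∑' m : ℕ, (Λ^[m] μ) p)) →
      K₁ = K₂ := by
    rintro K₁ K₂ ⟨he₁, hb₁⟩ ⟨he₂, hb₂⟩
    set D : X × X → ℝ := fun p => ‖K₁ p - K₂ p‖ with hD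
    set μs : X × X → ℝ := fun p => ∑' m : ℕ, (Λ^[m] μ) p with hμs
    have hD1 : ∀ p, D p ≤ Λ D p := by
      intro p
      rw [hΛ]
      have : K₁ p - K₂ p = ∑ i, a i • (K₁ (g i p) - K₂ (g i p)) := by
        rw [he₁ p, he₂ p, ← Finset.sum_sub_distrib]
        simp [smul_sub]
      calc D p = ‖∑ i, a i • (K₁ (g i p) - K₂ (g i p))‖ := by rw [hD]; simp only [this]
        _ ≤ ∑ i, ‖a i • (K₁ (g i p) - K₂ (g i p))‖ := norm_sum_le _ _
        _ = ∑ i, |a i| * D (g i p) := by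
            refine Finset.sum_congr rfl fun i _ => ?_
            rw [norm_smul, Real.norm_eq_abs]
    have hDm : ∀ m p, D p ≤ (Λ^[m] D) p := by
      intro m
      induction m with
      | zero => simp
      | succ m ih =>
        intro p
        refine le_trans (ih p) ?_
        rw [Function.iterate_succ_apply]
        exact hmono D (Λ D) hD1 m p
    have hD2 : ∀ q, D q ≤ 2 * μs q := by
      intro q
      calc D q = ‖(K₁ q - f q) + (f q - K₂ q)‖ := by simp only [hD]; rw [show K₁ q - K₂ q = (K₁ q - f q) + (f q - K₂ q) by abel]
        _ ≤ ‖K₁ q - f q‖ + ‖f q - K₂ q‖ := norm_add_le _ _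
        _ ≤ μs q + μs q := by
            refine add_le_add ?_ (hb₂ q)
            rw [norm_sub_rev]; exact hb₁ q
        _ = 2 * μs q := by ring
    -- Λ^[m] of constant multiple
    have hsmul : ∀ (c : ℝ) (δ : X × X → ℝ) (m : ℕ) (p : X × X),
        (Λ^[m] (fun q => c * δ q)) p = c * (Λ^[m] δ) p := by
      intro c δ m
      induction m with
      | zero => simp
      | succ m ih =>
        intro p
        rw [Function.iterate_succ_apply', Function.iterate_succ_apply', hΛ, hΛ,
          Finset.mul_sum]
        refine Finset.sum_congr rfl fun i _ => ?_
        rw [ih (g i p)]; ring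
    -- Λ^[m] of μs equals tail
    have htail : ∀ m p, (Λ^[m] μs) p = ∑' k : ℕ, (Λ^[k + m] μ) p := by
      intro m
      induction m with
      | zero => intro p; simp [hμs]
      | succ m ih =>
        intro p
        rw [Function.iterate_succ_apply', hΛ]
        have hsummable : ∀ q : X × X, Summable fun k : ℕ => (Λ^[k + m] μ) q := by
          intro q
          exact (summable_nat_add_iff m).mpr (hsum q)
        have heach : ∀ i : Fin (n + 1),
            |a i| * (Λ^[m] μs) (g i p) = ∑' k : ℕ, |a i| * (Λ^[k + m] μ) (g i p) := by
          intro i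
          rw [ih (g i p), tsum_mul_left]
        calc (∑ i, |a i| * (Λ^[m] μs) (g i p))
            = ∑ i, ∑' k : ℕ, |a i| * (Λ^[k + m] μ) (g i p) :=
              Finset.sum_congr rfl fun i _ => heach i
          _ = ∑' k : ℕ, ∑ i, |a i| * (Λ^[k + m] μ) (g i p) := by
              rw [Summable.tsum_finsetSum]
              intro i _
              exact (hsummable (g i p)).mul_left _
          _ = ∑' k : ℕ, (Λ^[k + (m + 1)] μ) p := by
              refine tsum_congr fun k => ?_
              have : k + (m + 1) = (k + m) + 1 := by ring
              rw [this, Function.iterate_succ_apply', hΛ]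
    -- tail tends to zero
    funext p
    have htend0 : Filter.Tendsto (fun m => ∑' k : ℕ, (Λ^[k + m] μ) p)
        Filter.atTop (nhds 0) := tendsto_sum_nat_add (fun k => (Λ^[k] μ) p)
    have hDle : ∀ m, D p ≤ 2 * ∑' k : ℕ, (Λ^[k + m] μ) p := by
      intro m
      calc D p ≤ (Λ^[m] D) p := hDm m p
        _ ≤ (Λ^[m] (fun q => 2 * μs q)) p := hmono D _ hD2 m p
        _ = 2 * (Λ^[m] μs) p := hsmul 2 μs m p
        _ = 2 * ∑' k : ℕ, (Λ^[k + m] μ) p := by rw [htail m p]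
    have : D p ≤ 0 := by
      have h2 : Filter.Tendsto (fun m => 2 * ∑' k : ℕ, (Λ^[k + m] μ) p)
          Filter.atTop (nhds (2 * 0)) := htend0.const_mul 2
      rw [mul_zero] at h2
      exact ge_of_tendsto h2 (Filter.Eventually.of_forall hDle)
    have hD0 : D p = 0 := le_antisymm this (norm_nonneg _)
    have : K₁ p - K₂ p = 0 := by rwa [hD, norm_eq_zero] at hD0
    exact sub_eq_zero.mp this
  exact ⟨K, ⟨hKeq, hbound⟩, fun K' hK' => huniq K' K hK' ⟨hKeq, hbound⟩⟩
end

section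
/- Let X be a normed linear space, Y a Banach space, ρ ∈ ℝ with |ρ| < 1, r > 2. Suppose f : X×X → Y satisfies ‖f(x+y, z−w) + f(x−y, z+w) − 2f(x,z) + 2f(y,w)‖ ≤ 2(‖x‖^r + ‖z‖^r) + ‖y‖^r + ‖w‖^r for all x,y,z,w ∈ X. Define (Tf)(x,z) = 2f(x/2, z/2) − 2f(x/2, −z/2). Then for every n ∈ ℕ, ‖(Tⁿf)(x+y, z−w) + (Tⁿf)(x−y, z+w) − 2(Tⁿf)(x,z) + 2(Tⁿf)(y,w)‖ ≤ (4/2^r)^n · (2‖x‖^r + ‖y‖^r + 2‖z‖^r + ‖w‖^r) for all x,y,z,w ∈ X. -/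
theorem stmt_12 {X Y : Type*} [NormedAddCommGroup X] [NormedSpace ℝ X]
    [NormedAddCommGroup Y] [NormedSpace ℝ Y] [CompleteSpace Y]
    (ρ r : ℝ) (hρ : |ρ| < 1) (hr : 2 < r)
    (f : X × X → Y)
    (h : ∀ x y z w : X,
      ‖f (x + y, z - w) + f (x - y, z + w) - (2 : ℝ) • f (x, z) + (2 : ℝ) • f (y, w)‖ ≤
        2 * (‖x‖ ^ r + ‖z‖ ^ r) + ‖y‖ ^ r + ‖w‖ ^ r)
    (T : (X × X → Y) → (X × X → Y))
    (hT : ∀ g (x z : X),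
      T g (x, z) = (2 : ℝ) • g ((2 : ℝ)⁻¹ • x, (2 : ℝ)⁻¹ • z) -
        (2 : ℝ) • g ((2 : ℝ)⁻¹ • x, -((2 : ℝ)⁻¹ • z))) :
    ∀ (n : ℕ) (x y z w : X),
      ‖(T^[n] f) (x + y, z - w) + (T^[n] f) (x - y, z + w) - (2 : ℝ) • (T^[n] f) (x, z) +
          (2 : ℝ) • (T^[n] f) (y, w)‖ ≤
        (4 / 2 ^ r : ℝ) ^ n * (2 * ‖x‖ ^ r + ‖y‖ ^ r + 2 * ‖z‖ ^ r + ‖w‖ ^ r) := by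
  intro n
  induction n with
  | zero =>
    intro x y z w
    simp only [Function.iterate_zero, id_eq, pow_zero, one_mul]
    have := h x y z w
    linarith
  | succ n ih =>
    intro x y z w
    rw [Function.iterate_succ_apply']
    set g := T^[n] f with hg
    set a := (2:ℝ)⁻¹ • x
    set b := (2:ℝ)⁻¹ • y
    set c := (2:ℝ)⁻¹ • z
    set d := (2:ℝ)⁻¹ • w
    have key : T g (x + y, z - w) + T g (x - y, z + w) - (2:ℝ) • T g (x, z)
        + (2:ℝ) • T g (y, w)
        = (2:ℝ) • (g (a + b, c - d) + g (a - b, c + d) - (2:ℝ) • g (a, c)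
            + (2:ℝ) • g (b, d))
          - (2:ℝ) • (g (a + b, -c - -d) + g (a - b, -c + -d) - (2:ℝ) • g (a, -c)
            + (2:ℝ) • g (b, -d)) := by
      rw [hT g (x + y) (z - w), hT g (x - y) (z + w), hT g x z, hT g y w]
      have e1 : (2:ℝ)⁻¹ • (x + y) = a + b := smul_add _ _ _
      have e2 : (2:ℝ)⁻¹ • (z - w) = c - d := smul_sub _ _ _
      have e3 : (2:ℝ)⁻¹ • (x - y) = a - b := smul_sub _ _ _
      have e4 : (2:ℝ)⁻¹ • (z + w) = c + d := smul_add _ _ _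
      have e5 : -(c - d) = -c - -d := by abel
      have e6 : -(c + d) = -c + -d := by abel
      rw [e1, e2, e3, e4, e5, e6]
      module
    rw [key]
    have ih1 := ih a b c d
    have ih2 := ih a b (-c) (-d)
    have hna : ‖a‖ ^ r = ‖x‖ ^ r / 2 ^ r := by
      rw [norm_smul, ← Real.div_rpow (norm_nonneg x) (by norm_num : (0:ℝ) ≤ 2)]
      norm_num
      congr 1
      ring
    have hnb : ‖b‖ ^ r = ‖y‖ ^ r / 2 ^ r := by
      rw [norm_smul, ← Real.div_rpow (norm_nonneg y) (by norm_num : (0:ℝ) ≤ 2)]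
      norm_num
      congr 1
      ring
    have hnc : ‖c‖ ^ r = ‖z‖ ^ r / 2 ^ r := by
      rw [norm_smul, ← Real.div_rpow (norm_nonneg z) (by norm_num : (0:ℝ) ≤ 2)]
      norm_num
      congr 1
      ring
    have hnd : ‖d‖ ^ r = ‖w‖ ^ r / 2 ^ r := by
      rw [norm_smul, ← Real.div_rpow (norm_nonneg w) (by norm_num : (0:ℝ) ≤ 2)]
      norm_num
      congr 1
      ring
    rw [norm_neg, norm_neg] at ih2
    have tri := norm_sub_le
      ((2:ℝ) • (g (a + b, c - d) + g (a - b, c + d) - (2:ℝ) • g (a, c) + (2:ℝ) • g (b, d)))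
      ((2:ℝ) • (g (a + b, -c - -d) + g (a - b, -c + -d) - (2:ℝ) • g (a, -c) + (2:ℝ) • g (b, -d)))
    rw [norm_smul, norm_smul] at tri
    have h2r : (0:ℝ) < 2 ^ r := Real.rpow_pos_of_pos (by norm_num) r
    have hCn : (0:ℝ) ≤ (4 / 2 ^ r : ℝ) ^ n :=
      pow_nonneg (by positivity) n
    calc ‖_‖ ≤ _ := tri
      _ ≤ 2 * ((4 / 2 ^ r : ℝ) ^ n * (2 * ‖a‖ ^ r + ‖b‖ ^ r + 2 * ‖c‖ ^ r + ‖d‖ ^ r))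
          + 2 * ((4 / 2 ^ r : ℝ) ^ n * (2 * ‖a‖ ^ r + ‖b‖ ^ r + 2 * ‖c‖ ^ r + ‖d‖ ^ r)) := by
        have : ‖(2:ℝ)‖ = 2 := by norm_num
        rw [this]
        gcongr
      _ = (4 / 2 ^ r : ℝ) ^ (n + 1) * (2 * ‖x‖ ^ r + ‖y‖ ^ r + 2 * ‖z‖ ^ r + ‖w‖ ^ r) := by
        rw [hna, hnb, hnc, hnd, pow_succ]
        field_simp
        ring
end

section
/- Let X be a real vector space and Y a real vector space, and suppose K : X×X → Y satisfies K(x+y, z−w) + K(x−y, z+w) − 2K(x,z) + 2K(y,w) = 0 for all x,y,z,w ∈ X, and K is symmetric (K(x,y)=K(y,x)). Then K is biadditive: K(x+y, w) = K(x,w) + K(y,w) and K(x, z+w) = K(x,z) + K(x,w) for all x,y,z,w ∈ X. -/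
private lemma smul_cancel' {Y : Type*} [AddCommGroup Y] [Module ℝ Y]
    {c : ℝ} (hc : c ≠ 0) {v : Y} (h : c • v = 0) : v = 0 := by
  rcases smul_eq_zero.mp h with h' | h'
  · exact absurd h' hc
  · exact h'

theorem stmt_15 {X Y : Type*} [AddCommGroup X] [Module ℝ X]
    [AddCommGroup Y] [Module ℝ Y]
    (K : X × X → Y)
    (hK : ∀ x y z w : X,
      K (x + y, z - w) + K (x - y, z + w) - (2 : ℝ) • K (x, z) + (2 : ℝ) • K (y, w) = 0)
    (hsymm : ∀ x y : X, K (x, y) = K (y, x)) :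
    (∀ x y w : X, K (x + y, w) = K (x, w) + K (y, w)) ∧
    (∀ x z w : X, K (x, z + w) = K (x, z) + K (x, w)) := by
  -- K(0,0) = 0
  have h00 : K (0, 0) = 0 := by
    have h := hK 0 0 0 0
    simp only [add_zero, sub_zero, zero_add, zero_sub, neg_zero, sub_self] at h
    refine smul_cancel' (c := (2:ℝ)) (by norm_num) ?_
    linear_combination (norm := module) h
  -- K(0,w) = 0
  have hA : ∀ w : X, K (0, w) = 0 := by
    intro w
    have h1 := hK 0 0 0 w
    have h2 := hK 0 0 0 (-w)
    simp only [add_zero, sub_zero, zero_add, zero_sub, neg_neg, h00, smul_zero] at h1 h2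
    refine smul_cancel' (c := (8:ℝ)) (by norm_num) ?_
    linear_combination (norm := module) (3:ℝ) • h1 - h2
  -- K(w,0) = 0
  have hB : ∀ w : X, K (w, 0) = 0 := fun w => (hsymm w 0).trans (hA w)
  -- Jensen type equation in the second variable
  have hJ : ∀ x z w : X, K (x, z - w) + K (x, z + w) = (2:ℝ) • K (x, z) := by
    intro x z w
    have h := hK x 0 z w
    simp only [add_zero, sub_zero, hA, smul_zero] at h
    linear_combination (norm := module) h
  -- additivity in the second variable
  have hadd2 : ∀ x a b : X, K (x, a + b) = K (x, a) + K (x, b) := by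
    intro x a b
    set c : X := (2⁻¹ : ℝ) • (a + b) with hc
    set d : X := (2⁻¹ : ℝ) • (a - b) with hd
    have hcd1 : c - d = b := by rw [hc, hd]; module
    have hcd2 : c + d = a := by rw [hc, hd]; module
    have hcc : c + c = a + b := by rw [hc]; module
    have e1 := hJ x c d
    rw [hcd1, hcd2] at e1
    have e2 := hJ x c c
    rw [sub_self, hB, hcc, zero_add] at e2
    rw [e2, ← e1]; abel
  refine ⟨?_, hadd2⟩
  intro x y w
  rw [hsymm (x + y) w, hadd2 w x y, hsymm w x, hsymm w y]
end

section
/- Let X be a normed linear space, Y a Banach space, T an operator on functions X×X → Y of the form (Tg)(x,y) = Σᵢ aᵢ g(gᵢ(x,y)) with aᵢ ∈ ℝ and gᵢ : X×X → X×X, and Λ the associated operator (Λδ)(x,y) = Σᵢ |aᵢ| δ(gᵢ(x,y)) on nonnegative functions. If ψ₁ and ψ₂ are both fixed points of T satisfying ‖ψⱼ(x,y) − f(x,y)‖ ≤ μ*(x,y) := Σ_{n=0}^∞ (Λⁿμ)(x,y) for all (x,y) (with this sum finite everywhere), and ‖f − Tf‖ ≤ μ pointwise, then ψ₁ = ψ₂.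 -/
theorem stmt_17 {X Y : Type*} [NormedAddCommGroup X] [NormedSpace ℝ X]
    [NormedAddCommGroup Y] [NormedSpace ℝ Y] [CompleteSpace Y]
    (f : X × X → Y) (n : ℕ) (a : Fin (n + 1) → ℝ) (g : Fin (n + 1) → X × X → X × X)
    (μ : X × X → ℝ) (hμ : ∀ p, 0 ≤ μ p)
    (T : (X × X → Y) → (X × X → Y))
    (hT : ∀ ξ p, T ξ p = ∑ i, a i • ξ (g i p))
    (Λ : (X × X → ℝ) → (X × X → ℝ))
    (hΛ : ∀ δ p, Λ δ p = ∑ i, |a i| * δ (g i p))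
    (hsum : ∀ p : X × X, Summable fun m : ℕ => (Λ^[m] μ) p)
    (h : ∀ p : X × X, ‖f p - T f p‖ ≤ μ p)
    (ψ₁ ψ₂ : X × X → Y) (hψ₁ : T ψ₁ = ψ₁) (hψ₂ : T ψ₂ = ψ₂)
    (hb₁ : ∀ p : X × X, ‖ψ₁ p - f p‖ ≤ ∑' m : ℕ, (Λ^[m] μ) p)
    (hb₂ : ∀ p : X × X, ‖ψ₂ p - f p‖ ≤ ∑' m : ℕ, (Λ^[m] μ) p) :
    ψ₁ = ψ₂ := by
  -- tail sums
  set S : ℕ → X × X → ℝ := fun m p => ∑' k : ℕ, (Λ^[k + m] μ) p with hS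
  have htail : ∀ (m : ℕ) (p : X × X), Summable fun k : ℕ => (Λ^[k + m] μ) p := by
    intro m p
    exact (summable_nat_add_iff m).mpr (hsum p)
  have hTdiff : ∀ (ξ₁ ξ₂ : X × X → Y) (p : X × X),
      ‖T ξ₁ p - T ξ₂ p‖ ≤ ∑ i, |a i| * ‖ξ₁ (g i p) - ξ₂ (g i p)‖ := by
    intro ξ₁ ξ₂ p
    rw [hT, hT, ← Finset.sum_sub_distrib]
    refine (norm_sum_le _ _).trans (Finset.sum_le_sum fun i _ => ?_)
    rw [← smul_sub, norm_smul, Real.norm_eq_abs]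
  have hΛS : ∀ (m : ℕ) (p : X × X), (∑ i, |a i| * S m (g i p)) = S (m + 1) p := by
    intro m p
    have h1 : ∀ i : Fin (n + 1),
        |a i| * S m (g i p) = ∑' k : ℕ, |a i| * (Λ^[k + m] μ) (g i p) := by
      intro i
      rw [hS]
      exact (tsum_mul_left).symm
    simp only [h1]
    rw [← Summable.tsum_finsetSum (fun i _ => (htail m (g i p)).mul_left _)]
    have h2 : ∀ k : ℕ, (∑ i, |a i| * (Λ^[k + m] μ) (g i p)) = (Λ^[k + (m + 1)] μ) p := by
      intro k
      rw [show k + (m + 1) = (k + m) + 1 from rfl, Function.iterate_succ_apply', hΛ]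
    simp only [h2, hS]
  have hD : ∀ (m : ℕ) (p : X × X), ‖ψ₁ p - ψ₂ p‖ ≤ 2 * S m p := by
    intro m
    induction m with
    | zero =>
      intro p
      have := (norm_sub_le_norm_sub_add_norm_sub (ψ₁ p) (f p) (ψ₂ p))
      have h2 : ‖f p - ψ₂ p‖ = ‖ψ₂ p - f p‖ := norm_sub_rev _ _
      have hb : ‖ψ₁ p - ψ₂ p‖ ≤ (∑' m : ℕ, (Λ^[m] μ) p) + (∑' m : ℕ, (Λ^[m] μ) p) := by
        calc ‖ψ₁ p - ψ₂ p‖ ≤ ‖ψ₁ p - f p‖ + ‖f p - ψ₂ p‖ := this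
        _ ≤ _ := by rw [h2]; exact add_le_add (hb₁ p) (hb₂ p)
      calc ‖ψ₁ p - ψ₂ p‖ ≤ (∑' m : ℕ, (Λ^[m] μ) p) + (∑' m : ℕ, (Λ^[m] μ) p) := hb
      _ = 2 * S 0 p := by rw [hS]; simp; ring
    | succ m ih =>
      intro p
      calc ‖ψ₁ p - ψ₂ p‖ = ‖T ψ₁ p - T ψ₂ p‖ := by rw [hψ₁, hψ₂]
      _ ≤ ∑ i, |a i| * ‖ψ₁ (g i p) - ψ₂ (g i p)‖ := hTdiff _ _ _
      _ ≤ ∑ i, |a i| * (2 * S m (g i p)) :=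
        Finset.sum_le_sum fun i _ => mul_le_mul_of_nonneg_left (ih _) (abs_nonneg _)
      _ = 2 * ∑ i, |a i| * S m (g i p) := by rw [Finset.mul_sum]; congr 1; ext i; ring
      _ = 2 * S (m + 1) p := by rw [hΛS]
  funext p
  have hlim : Filter.Tendsto (fun m => 2 * S m p) Filter.atTop (nhds 0) := by
    have := tendsto_sum_nat_add (f := fun k : ℕ => (Λ^[k] μ) p)
    have h2 : Filter.Tendsto (fun m => S m p) Filter.atTop (nhds 0) := this
    simpa using h2.const_mul 2
  have : ‖ψ₁ p - ψ₂ p‖ ≤ 0 :=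
    le_of_tendsto_of_tendsto' tendsto_const_nhds hlim (fun m => hD m p)
  have := le_antisymm this (norm_nonneg _)
  rwa [norm_eq_zero, sub_eq_zero] at this
end
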